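/- Let N, d be positive integers and let U be a unitary matrix indexed by Fin N × Fin d. Then: (i) for every Y : Matrix (Fin d) (Fin d) ℂ, ((1 ⊗ Y) commutes with Uᴴ * (X ⊗ 1) * U for every X : Matrix (Fin N) (Fin N) ℂ) if and only if Y commutes with every product (Uᴴ)(f₁,g₁) * U(f₂,g₂); hence the commutant of A_r(U) equals {Y : ∀ X, (1 ⊗ Y) * (Uᴴ*(X⊗1)*U) = (Uᴴ*(X⊗1)*U) * (1 ⊗ Y)}; and (ii) A_r(U) is the smallest unital star-subalgebra A of Matrix (Fin d) (Fin d) ℂ such that for every X : Matrix (Fin N) (Fin N) ℂ, every block (Uᴴ*(X⊗1)*U)(e_i, e_j) belongs to A (i.e. Uᴴ(X⊗1)U ∈ B(H) ⊗ A for all X). -/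

import Mathlib

open scoped Kronecker
open Matrix

/-- The slice `M(f,g)` of an operator on `ℂ^N ⊗ ℂ^d`: the partial trace `Tr_{|g⟩⟨f|}[M]`,
given by `M(f,g) k l = ∑ i j, conj (f i) * g j * M (i,k) (j,l)`. -/
noncomputable def envSlice {N d : ℕ} (M : Matrix (Fin N × Fin d) (Fin N × Fin d) ℂ)
    (f g : Fin N → ℂ) : Matrix (Fin d) (Fin d) ℂ :=
  Matrix.of fun k l => ∑ i, ∑ j, (starRingEnd ℂ) (f i) * g j * M (i, k) (j, l)

/-- The Environment Algebra `A(U)`: the unital star-subalgebra generated by all slices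
`U(f,g)` and `Uᴴ(f,g)`. -/
noncomputable def envAlg {N d : ℕ} (U : Matrix (Fin N × Fin d) (Fin N × Fin d) ℂ) :
    StarSubalgebra ℂ (Matrix (Fin d) (Fin d) ℂ) :=
  StarAlgebra.adjoin ℂ
    ({A | ∃ f g, A = envSlice U f g} ∪ {A | ∃ f g, A = envSlice Uᴴ f g})

/-- The Environment Right-Action Algebra `A_r(U)`: the unital star-subalgebra generated by all
products `Uᴴ(f₁,g₁) * U(f₂,g₂)`. -/
noncomputable def envActAlg {N d : ℕ} (U : Matrix (Fin N × Fin d) (Fin N × Fin d) ℂ) :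
    StarSubalgebra ℂ (Matrix (Fin d) (Fin d) ℂ) :=
  StarAlgebra.adjoin ℂ
    {A | ∃ f₁ g₁ f₂ g₂, A = envSlice Uᴴ f₁ g₁ * envSlice U f₂ g₂}

/-! The slice `M ↦ M(f,g)` composes like a partial trace, `(A * B)(f,g) = ∑ₐ A(f,eₐ) B(eₐ,g)`,
and turns `1 ⊗ Y` into `Y` on either side. Hence the blocks of `Uᴴ (X ⊗ 1) U` are linear
combinations of the generators `Uᴴ(f₁,g₁) U(f₂,g₂)`, and conversely each generator is the
`(f₁,g₂)`-slice of `Uᴴ (|g₁⟩⟨f₂| ⊗ 1) U`. Since an operator is determined by its blocks, this gives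
the commutation criterion and the minimality of `A_r(U)`. The generating set is closed under
`star`, so commuting with it already means commuting with all of `A_r(U)`. -/

namespace StarAlgebra

variable {R A : Type*} [CommSemiring R] [StarRing R] [Semiring A] [StarRing A] [Algebra R A]
  [StarModule R A]

theorem commute_of_mem_adjoin {s : Set A} (hs : ∀ a ∈ s, star a ∈ s) {y : A}
    (hy : ∀ a ∈ s, Commute y a) {a : A} (ha : a ∈ adjoin R s) : Commute y a := by
  have hy' : y ∈ StarSubalgebra.centralizer R s :=
    (StarSubalgebra.mem_centralizer_iff R).mpr fun b hb => ⟨(hy b hb).symm, (hy _ (hs b hb)).symm⟩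
  exact ((StarSubalgebra.mem_centralizer_iff R).mp
    (adjoin_le_centralizer_centralizer R s ha) y hy').1

end StarAlgebra

section envSlice

variable {N d : ℕ}

theorem envSlice_single_single_apply (M : Matrix (Fin N × Fin d) (Fin N × Fin d) ℂ)
    (i j : Fin N) (k l : Fin d) :
    envSlice M (Pi.single i 1) (Pi.single j 1) k l = M (i, k) (j, l) := by
  simp [envSlice, Pi.single_apply]

theorem envSlice_ext {M M' : Matrix (Fin N × Fin d) (Fin N × Fin d) ℂ}
    (h : ∀ i j, envSlice M (Pi.single i 1) (Pi.single j 1)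
      = envSlice M' (Pi.single i 1) (Pi.single j 1)) : M = M' := by
  ext ⟨i, k⟩ ⟨j, l⟩
  rw [← envSlice_single_single_apply M, h, envSlice_single_single_apply]

theorem envSlice_single_right_apply (M : Matrix (Fin N × Fin d) (Fin N × Fin d) ℂ)
    (f : Fin N → ℂ) (a : Fin N) (k l : Fin d) :
    envSlice M f (Pi.single a 1) k l = ∑ i, starRingEnd ℂ (f i) * M (i, k) (a, l) := by
  simp [envSlice, Pi.single_apply]

theorem envSlice_single_left_apply (M : Matrix (Fin N × Fin d) (Fin N × Fin d) ℂ)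
    (g : Fin N → ℂ) (a : Fin N) (k l : Fin d) :
    envSlice M (Pi.single a 1) g k l = ∑ j, g j * M (a, k) (j, l) := by
  simp [envSlice, Pi.single_apply]

theorem envSlice_eq_sum_right (M : Matrix (Fin N × Fin d) (Fin N × Fin d) ℂ) (f g : Fin N → ℂ) :
    envSlice M f g = ∑ j, g j • envSlice M f (Pi.single j 1) := by
  ext k l
  simp only [Matrix.sum_apply, Matrix.smul_apply, envSlice_single_right_apply]
  simp only [envSlice, of_apply, smul_eq_mul, Finset.mul_sum]
  rw [Finset.sum_comm]
  congr! 2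
  ring

theorem envSlice_eq_sum_left (M : Matrix (Fin N × Fin d) (Fin N × Fin d) ℂ) (f g : Fin N → ℂ) :
    envSlice M f g = ∑ i, starRingEnd ℂ (f i) • envSlice M (Pi.single i 1) g := by
  ext k l
  simp only [Matrix.sum_apply, Matrix.smul_apply, envSlice_single_left_apply]
  simp only [envSlice, of_apply, smul_eq_mul, Finset.mul_sum]
  congr! 2
  ring

theorem star_envSlice (M : Matrix (Fin N × Fin d) (Fin N × Fin d) ℂ) (f g : Fin N → ℂ) :
    star (envSlice M f g) = envSlice Mᴴ g f := by
  ext k l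
  simp only [envSlice, star_apply, conjTranspose_apply, of_apply, star_sum, star_mul',
    RCLike.star_def, RingHomCompTriple.comp_apply, RingHom.id_apply]
  rw [Finset.sum_comm]
  congr! 2
  ring

theorem envSlice_kronecker (X : Matrix (Fin N) (Fin N) ℂ) (Y : Matrix (Fin d) (Fin d) ℂ)
    (f g : Fin N → ℂ) : envSlice (X ⊗ₖ Y) f g = (star f ⬝ᵥ X *ᵥ g) • Y := by
  ext k l
  simp only [envSlice, kroneckerMap_apply, of_apply, dotProduct, Pi.star_apply, RCLike.star_def,
    mulVec, Finset.mul_sum, Matrix.smul_apply, smul_eq_mul, Finset.sum_mul]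
  congr! 2
  ring

theorem envSlice_mul (A B : Matrix (Fin N × Fin d) (Fin N × Fin d) ℂ) (f g : Fin N → ℂ) :
    envSlice (A * B) f g = ∑ a, envSlice A f (Pi.single a 1) * envSlice B (Pi.single a 1) g := by
  ext k l
  simp only [Matrix.sum_apply, Matrix.mul_apply, envSlice_single_right_apply,
    envSlice_single_left_apply, Finset.sum_mul_sum]
  simp only [envSlice, of_apply, Matrix.mul_apply, Finset.mul_sum]
  rw [Finset.sum_comm_cycle, Fintype.sum_prod_type]
  congr! 4
  ring

theorem envSlice_eq_sum_single (M : Matrix (Fin N × Fin d) (Fin N × Fin d) ℂ) (f g : Fin N → ℂ) :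
    envSlice M f g =
      ∑ i, ∑ j, (starRingEnd ℂ (f i) * g j) • envSlice M (Pi.single i 1) (Pi.single j 1) := by
  rw [envSlice_eq_sum_left]
  refine Finset.sum_congr rfl fun i _ => ?_
  rw [envSlice_eq_sum_right, Finset.smul_sum]
  simp only [smul_smul]

theorem envSlice_one_kronecker_mul (Y : Matrix (Fin d) (Fin d) ℂ)
    (M : Matrix (Fin N × Fin d) (Fin N × Fin d) ℂ) (f g : Fin N → ℂ) :
    envSlice ((1 ⊗ₖ Y) * M) f g = Y * envSlice M f g := by
  rw [envSlice_mul, envSlice_eq_sum_left M, Finset.mul_sum]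
  refine Finset.sum_congr rfl fun a _ => ?_
  rw [envSlice_kronecker, one_mulVec]
  simp

theorem envSlice_mul_one_kronecker (Y : Matrix (Fin d) (Fin d) ℂ)
    (M : Matrix (Fin N × Fin d) (Fin N × Fin d) ℂ) (f g : Fin N → ℂ) :
    envSlice (M * (1 ⊗ₖ Y)) f g = envSlice M f g * Y := by
  rw [envSlice_mul, envSlice_eq_sum_right M, Finset.sum_mul]
  refine Finset.sum_congr rfl fun a _ => ?_
  rw [envSlice_kronecker, one_mulVec]
  simp

theorem envSlice_kronecker_one_mul (X : Matrix (Fin N) (Fin N) ℂ)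
    (B : Matrix (Fin N × Fin d) (Fin N × Fin d) ℂ) (a : Fin N) (g : Fin N → ℂ) :
    envSlice ((X ⊗ₖ 1) * B) (Pi.single a 1) g = ∑ c, X a c • envSlice B (Pi.single c 1) g := by
  rw [envSlice_mul]
  refine Finset.sum_congr rfl fun c _ => ?_
  simp [envSlice_kronecker]

theorem envSlice_mul_kronecker_one_mul (A B : Matrix (Fin N × Fin d) (Fin N × Fin d) ℂ)
    (X : Matrix (Fin N) (Fin N) ℂ) (f g : Fin N → ℂ) :
    envSlice (A * (X ⊗ₖ 1) * B) f g =
      ∑ a, ∑ c, X a c • (envSlice A f (Pi.single a 1) * envSlice B (Pi.single c 1) g) := by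
  rw [mul_assoc, envSlice_mul]
  refine Finset.sum_congr rfl fun a _ => ?_
  rw [envSlice_kronecker_one_mul, Finset.mul_sum]
  simp only [mul_smul_comm]

theorem envSlice_mul_envSlice (A B : Matrix (Fin N × Fin d) (Fin N × Fin d) ℂ)
    (f₁ g₁ f₂ g₂ : Fin N → ℂ) :
    envSlice A f₁ g₁ * envSlice B f₂ g₂ =
      envSlice (A * (vecMulVec g₁ (star f₂) ⊗ₖ 1) * B) f₁ g₂ := by
  rw [envSlice_mul_kronecker_one_mul, envSlice_eq_sum_right A f₁ g₁, envSlice_eq_sum_left B f₂ g₂,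
    Finset.sum_mul_sum]
  simp [vecMulVec_apply, smul_smul, mul_comm]

end envSlice

section Sandwich

variable {N d : ℕ} (A B : Matrix (Fin N × Fin d) (Fin N × Fin d) ℂ)

theorem commute_sandwich_iff (Y : Matrix (Fin d) (Fin d) ℂ) :
    (∀ X : Matrix (Fin N) (Fin N) ℂ,
      (1 ⊗ₖ Y) * (A * (X ⊗ₖ 1) * B) = (A * (X ⊗ₖ 1) * B) * (1 ⊗ₖ Y)) ↔
    ∀ f₁ g₁ f₂ g₂ : Fin N → ℂ,
      Y * (envSlice A f₁ g₁ * envSlice B f₂ g₂) = (envSlice A f₁ g₁ * envSlice B f₂ g₂) * Y := by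
  refine ⟨fun h f₁ g₁ f₂ g₂ => ?_, fun h X => envSlice_ext fun i j => ?_⟩
  · rw [envSlice_mul_envSlice, ← envSlice_one_kronecker_mul, h, envSlice_mul_one_kronecker]
  · rw [envSlice_one_kronecker_mul, envSlice_mul_one_kronecker, envSlice_mul_kronecker_one_mul,
      Finset.mul_sum, Finset.sum_mul]
    refine Finset.sum_congr rfl fun a _ => ?_
    rw [Finset.mul_sum, Finset.sum_mul]
    refine Finset.sum_congr rfl fun c _ => ?_
    rw [mul_smul_comm, smul_mul_assoc, h]

theorem envSlice_sandwich_mem_iff {S : Type*} [SetLike S (Matrix (Fin d) (Fin d) ℂ)]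
    [AddSubmonoidClass S (Matrix (Fin d) (Fin d) ℂ)] [SMulMemClass S ℂ (Matrix (Fin d) (Fin d) ℂ)]
    (s : S) :
    (∀ (X : Matrix (Fin N) (Fin N) ℂ) (i j : Fin N),
      envSlice (A * (X ⊗ₖ 1) * B) (Pi.single i 1) (Pi.single j 1) ∈ s) ↔
    ∀ f₁ g₁ f₂ g₂ : Fin N → ℂ, envSlice A f₁ g₁ * envSlice B f₂ g₂ ∈ s := by
  refine ⟨fun h f₁ g₁ f₂ g₂ => ?_, fun h X i j => ?_⟩
  · rw [envSlice_mul_envSlice, envSlice_eq_sum_single]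
    exact sum_mem fun i _ => sum_mem fun j _ => SMulMemClass.smul_mem _ (h _ i j)
  · rw [envSlice_mul_kronecker_one_mul]
    exact sum_mem fun a _ => sum_mem fun c _ => SMulMemClass.smul_mem _ (h _ _ _ _)

end Sandwich

theorem star_envSlice_conjTranspose_mul_envSlice {N d : ℕ}
    (U : Matrix (Fin N × Fin d) (Fin N × Fin d) ℂ) (f₁ g₁ f₂ g₂ : Fin N → ℂ) :
    star (envSlice Uᴴ f₁ g₁ * envSlice U f₂ g₂) = envSlice Uᴴ g₂ f₂ * envSlice U g₁ f₁ := by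
  rw [star_mul, star_envSlice, star_envSlice, conjTranspose_conjTranspose]

theorem envActAlg_smallest_general (N d : ℕ)
    (U : Matrix (Fin N × Fin d) (Fin N × Fin d) ℂ) :
    (∀ Y : Matrix (Fin d) (Fin d) ℂ,
      (∀ X : Matrix (Fin N) (Fin N) ℂ,
        ((1 : Matrix (Fin N) (Fin N) ℂ) ⊗ₖ Y) * (Uᴴ * (X ⊗ₖ (1 : Matrix (Fin d) (Fin d) ℂ)) * U)
          = (Uᴴ * (X ⊗ₖ (1 : Matrix (Fin d) (Fin d) ℂ)) * U) *
              ((1 : Matrix (Fin N) (Fin N) ℂ) ⊗ₖ Y))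
      ↔ (∀ f₁ g₁ f₂ g₂ : Fin N → ℂ,
          Y * (envSlice Uᴴ f₁ g₁ * envSlice U f₂ g₂)
            = (envSlice Uᴴ f₁ g₁ * envSlice U f₂ g₂) * Y)) ∧
    ({Y : Matrix (Fin d) (Fin d) ℂ | ∀ A ∈ envActAlg U, Y * A = A * Y} =
      {Y : Matrix (Fin d) (Fin d) ℂ | ∀ X : Matrix (Fin N) (Fin N) ℂ,
        ((1 : Matrix (Fin N) (Fin N) ℂ) ⊗ₖ Y) * (Uᴴ * (X ⊗ₖ (1 : Matrix (Fin d) (Fin d) ℂ)) * U)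
          = (Uᴴ * (X ⊗ₖ (1 : Matrix (Fin d) (Fin d) ℂ)) * U) *
              ((1 : Matrix (Fin N) (Fin N) ℂ) ⊗ₖ Y)}) ∧
    (∀ X : Matrix (Fin N) (Fin N) ℂ, ∀ i j : Fin N,
      envSlice (Uᴴ * (X ⊗ₖ (1 : Matrix (Fin d) (Fin d) ℂ)) * U)
        (Pi.single i 1) (Pi.single j 1) ∈ envActAlg U) ∧
    ∀ A : StarSubalgebra ℂ (Matrix (Fin d) (Fin d) ℂ),
      (∀ X : Matrix (Fin N) (Fin N) ℂ, ∀ i j : Fin N,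
        envSlice (Uᴴ * (X ⊗ₖ (1 : Matrix (Fin d) (Fin d) ℂ)) * U)
          (Pi.single i 1) (Pi.single j 1) ∈ A) →
      envActAlg U ≤ A := by
  have mem_envActAlg (f₁ g₁ f₂ g₂ : Fin N → ℂ) :
      envSlice Uᴴ f₁ g₁ * envSlice U f₂ g₂ ∈ envActAlg U :=
    StarAlgebra.subset_adjoin ℂ _ ⟨f₁, g₁, f₂, g₂, rfl⟩
  refine ⟨commute_sandwich_iff Uᴴ U, ?_, (envSlice_sandwich_mem_iff Uᴴ U _).mpr mem_envActAlg,
    fun A hA => StarAlgebra.adjoin_le ?_⟩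
  · ext Y
    rw [Set.mem_ofPred_eq, Set.mem_ofPred_eq, commute_sandwich_iff]
    refine ⟨fun h f₁ g₁ f₂ g₂ => h _ (mem_envActAlg f₁ g₁ f₂ g₂), fun h A hA => ?_⟩
    refine StarAlgebra.commute_of_mem_adjoin ?_ ?_ hA
    · rintro _ ⟨f₁, g₁, f₂, g₂, rfl⟩
      exact ⟨g₂, f₂, g₁, f₁, star_envSlice_conjTranspose_mul_envSlice U f₁ g₁ f₂ g₂⟩
    · rintro _ ⟨f₁, g₁, f₂, g₂, rfl⟩
      exact h f₁ g₁ f₂ g₂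
  · rintro _ ⟨f₁, g₁, f₂, g₂, rfl⟩
    exact (envSlice_sandwich_mem_iff Uᴴ U A).mp hA f₁ g₁ f₂ g₂

/-- (i) characterization of the commutant of `A_r(U)`; (ii) `A_r(U)` is the
smallest unital star-subalgebra `A` with `Uᴴ(X ⊗ 1)U ∈ B(H) ⊗ A` for all `X`. -/
theorem envActAlg_smallest (N d : ℕ) (hN : 0 < N) (hd : 0 < d)
    (U : Matrix (Fin N × Fin d) (Fin N × Fin d) ℂ)
    (hU : Uᴴ * U = 1) (hU' : U * Uᴴ = 1) :
    (∀ Y : Matrix (Fin d) (Fin d) ℂ,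
      (∀ X : Matrix (Fin N) (Fin N) ℂ,
        ((1 : Matrix (Fin N) (Fin N) ℂ) ⊗ₖ Y) * (Uᴴ * (X ⊗ₖ (1 : Matrix (Fin d) (Fin d) ℂ)) * U)
          = (Uᴴ * (X ⊗ₖ (1 : Matrix (Fin d) (Fin d) ℂ)) * U) *
              ((1 : Matrix (Fin N) (Fin N) ℂ) ⊗ₖ Y))
      ↔ (∀ f₁ g₁ f₂ g₂ : Fin N → ℂ,
          Y * (envSlice Uᴴ f₁ g₁ * envSlice U f₂ g₂)
            = (envSlice Uᴴ f₁ g₁ * envSlice U f₂ g₂) * Y)) ∧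
    ({Y : Matrix (Fin d) (Fin d) ℂ | ∀ A ∈ envActAlg U, Y * A = A * Y} =
      {Y : Matrix (Fin d) (Fin d) ℂ | ∀ X : Matrix (Fin N) (Fin N) ℂ,
        ((1 : Matrix (Fin N) (Fin N) ℂ) ⊗ₖ Y) * (Uᴴ * (X ⊗ₖ (1 : Matrix (Fin d) (Fin d) ℂ)) * U)
          = (Uᴴ * (X ⊗ₖ (1 : Matrix (Fin d) (Fin d) ℂ)) * U) *
              ((1 : Matrix (Fin N) (Fin N) ℂ) ⊗ₖ Y)}) ∧
    (∀ X : Matrix (Fin N) (Fin N) ℂ, ∀ i j : Fin N,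
      envSlice (Uᴴ * (X ⊗ₖ (1 : Matrix (Fin d) (Fin d) ℂ)) * U)
        (Pi.single i 1) (Pi.single j 1) ∈ envActAlg U) ∧
    ∀ A : StarSubalgebra ℂ (Matrix (Fin d) (Fin d) ℂ),
      (∀ X : Matrix (Fin N) (Fin N) ℂ, ∀ i j : Fin N,
        envSlice (Uᴴ * (X ⊗ₖ (1 : Matrix (Fin d) (Fin d) ℂ)) * U)
          (Pi.single i 1) (Pi.single j 1) ∈ A) →
      envActAlg U ≤ A :=
  envActAlg_smallest_general N d U
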